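/- arXiv:2601.01377 — 9 statements merged into one kernel-verified Lean document; each statement's English description precedes it below -/
import Mathlib

section
/- A partial order on a set P that is super-Artinian (i.e., Artinian, and whenever p,q ∈ P are incomparable the sets of elements below p and below q coincide, and likewise the sets above them) arises exactly from a norm function: there exist a well-ordered set P₀ and a map N : P → P₀ such that p < q if and only if N(p) < N(q). -/
/-! The rank of an element of a well-founded relation is determined by its lower set. In a
super-Artinian order incomparable elements have the same lower set, hence the same rank, so
`p < q ↔ rank p < rank q`; the rank is the norm, with values in the ordinals (made small by
passing to the quotient by its kernel). Conversely a norm into a well-order pulls back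
well-foundedness, and incomparable elements have equal norms. -/

universe u v

theorem wellFounded_iff_not_exists_descending {α : Type u} {r : α → α → Prop} :
    WellFounded r ↔ ¬ ∃ f : ℕ → α, ∀ k, r (f (k + 1)) (f k) := by
  rw [wellFounded_iff_isEmpty_descending_chain, isEmpty_subtype, not_exists]

namespace IsWellFounded

variable {α : Type u} {r : α → α → Prop} [IsWellFounded α r]

theorem rank_eq_of_forall_rel_iff {a b : α} (h : ∀ c, r c a ↔ r c b) : rank r a = rank r b := by
  have hab : (r · a) = (r · b) := funext fun c => propext (h c)
  rw [rank_eq, rank_eq, hab]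

theorem rel_iff_rank_lt_of_incomparable
    (hinc : ∀ a b, ¬ r a b → ¬ r b a → ∀ c, r c a ↔ r c b) (a b : α) :
    r a b ↔ rank r a < rank r b := by
  refine ⟨rank_lt_of_rel, fun hlt => ?_⟩
  by_contra hab
  by_cases hba : r b a
  · exact (rank_lt_of_rel hba).not_gt hlt
  · exact hlt.ne (rank_eq_of_forall_rel_iff (hinc a b hab hba))

end IsWellFounded

theorem exists_norm_of_rel_iff_lt {α : Type u} {β : Type v} [LinearOrder β] [WellFoundedLT β]
    {r : α → α → Prop} (f : α → β) (hf : ∀ a b, r a b ↔ f a < f b) :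
    ∃ (α₀ : Type u) (_ : LinearOrder α₀), WellFounded ((· < ·) : α₀ → α₀ → Prop) ∧
      ∃ N : α → α₀, ∀ a b, r a b ↔ N a < N b :=
  letI : LinearOrder (Quotient (Setoid.ker f)) :=
    LinearOrder.lift' (Setoid.kerLift f) (Setoid.kerLift_injective f)
  ⟨_, this, InvImage.wf (Setoid.kerLift f) wellFounded_lt, Quotient.mk _, hf⟩

section Norm

variable {α : Type u} {β : Type v} [LinearOrder β] {r : α → α → Prop} {N : α → β}

theorem wellFounded_of_rel_iff_lt [WellFoundedLT β] (hN : ∀ a b, r a b ↔ N a < N b) :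
    WellFounded r := by
  have hr : r = InvImage (· < ·) N := funext₂ fun a b => propext (hN a b)
  exact hr ▸ InvImage.wf N wellFounded_lt

theorem forall_rel_iff_of_incomparable_of_rel_iff_lt (hN : ∀ a b, r a b ↔ N a < N b) {a b : α}
    (hab : ¬ r a b) (hba : ¬ r b a) : (∀ c, r c a ↔ r c b) ∧ (∀ c, r a c ↔ r b c) := by
  rw [hN] at hab hba
  have hNab : N a = N b := le_antisymm (not_lt.mp hba) (not_lt.mp hab)
  exact ⟨fun c => by rw [hN, hN, hNab], fun c => by rw [hN, hN, hNab]⟩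

end Norm

theorem stmt_0_general {P : Type} (lt : P → P → Prop) :
    ((¬ ∃ f : ℕ → P, ∀ k, lt (f (k + 1)) (f k)) ∧
      (∀ p q : P, ¬ lt p q → ¬ lt q p →
        ((∀ r, lt r p ↔ lt r q) ∧ (∀ r, lt p r ↔ lt q r)))) ↔
    (∃ (P₀ : Type) (_ : LinearOrder P₀),
      WellFounded ((· < ·) : P₀ → P₀ → Prop) ∧
      ∃ N : P → P₀, ∀ p q, lt p q ↔ N p < N q) := by
  constructor
  · rintro ⟨hart, hsup⟩
    have : IsWellFounded P lt := ⟨wellFounded_iff_not_exists_descending.mpr hart⟩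
    exact exists_norm_of_rel_iff_lt (IsWellFounded.rank lt)
      (IsWellFounded.rel_iff_rank_lt_of_incomparable fun p q hpq hqp => (hsup p q hpq hqp).1)
  · rintro ⟨P₀, _, hwf, N, hN⟩
    have : WellFoundedLT P₀ := ⟨hwf⟩
    exact ⟨wellFounded_iff_not_exists_descending.mp (wellFounded_of_rel_iff_lt hN),
      fun p q => forall_rel_iff_of_incomparable_of_rel_iff_lt hN⟩

/-- A partial order on a set `P` is super-Artinian (Artinian, and incomparable
elements have identical lower sets and identical upper sets) if and only if it arises from a
norm function `N : P → P₀` into a well-ordered set `P₀`, i.e. `p < q ↔ N p < N q`. -/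
theorem stmt_0 {P : Type} (lt : P → P → Prop)
    (hirr : ∀ p, ¬ lt p p) (htrans : Transitive lt) :
    ((¬ ∃ f : ℕ → P, ∀ k, lt (f (k + 1)) (f k)) ∧
      (∀ p q : P, ¬ lt p q → ¬ lt q p →
        ((∀ r, lt r p ↔ lt r q) ∧ (∀ r, lt p r ↔ lt q r)))) ↔
    (∃ (P₀ : Type) (_ : LinearOrder P₀),
      WellFounded ((· < ·) : P₀ → P₀ → Prop) ∧
      ∃ N : P → P₀, ∀ p q, lt p q ↔ N p < N q) :=
  stmt_0_general lt
end

section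
/- Define a relation on ℤⁿ by x < y iff N(x) < N(y) lexicographically, where N(x) = (‖x‖_∞, m(x), n − g(x), ‖x‖₁), m(x) is the number of coordinates of x with absolute value equal to ‖x‖_∞, and g(x) is the number of coordinates x_i with 0 < |x_i| < ‖x‖_∞. Then this relation is a strongly Artinian partial order: it is super-Artinian and every set {y : y < x} is finite. -/
/-- The sup-norm `‖x‖_∞` of `x ∈ ℤⁿ`. -/
def normInf (n : ℕ) (x : Fin n → ℤ) : ℕ := Finset.univ.sup fun i => (x i).natAbs

/-- `m(x)`: the number of maximal coordinates (those with `|x_i| = ‖x‖_∞`). -/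
def maxCount (n : ℕ) (x : Fin n → ℤ) : ℕ :=
  (Finset.univ.filter fun i => (x i).natAbs = normInf n x).card

/-- `g(x)`: the number of good coordinates (those with `0 < |x_i| < ‖x‖_∞`). -/
def goodCount (n : ℕ) (x : Fin n → ℤ) : ℕ :=
  (Finset.univ.filter fun i => 0 < (x i).natAbs ∧ (x i).natAbs < normInf n x).card

/-- The `ℓ¹`-norm `‖x‖₁`. -/
def norm1 (n : ℕ) (x : Fin n → ℤ) : ℕ := ∑ i, (x i).natAbs

/-- `x < y` iff `N(x) < N(y)` lexicographically, where
`N(x) = (‖x‖_∞, m(x), n − g(x), ‖x‖₁)`. -/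
def vecLt (n : ℕ) (x y : Fin n → ℤ) : Prop :=
  normInf n x < normInf n y ∨ (normInf n x = normInf n y ∧
    (maxCount n x < maxCount n y ∨ (maxCount n x = maxCount n y ∧
      (n - goodCount n x < n - goodCount n y ∨ (n - goodCount n x = n - goodCount n y ∧
        norm1 n x < norm1 n y)))))

/-!
`N` maps `ℤⁿ` into the lexicographic product `ℕ ×ₗ ℕ ×ₗ ℕ ×ₗ ℕ`, a well-founded linear order, and
`x < y` is exactly the pullback of that order along `N`. A pullback of a well-founded linear order
is a strict partial order with no infinite descending chain, and incomparable elements have the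
same image under `N`, hence the same lower and upper sets. Lower sets are finite because `y < x`
forces `‖y‖_∞ ≤ ‖x‖_∞`, and only finitely many `y ∈ ℤⁿ` satisfy that.
-/

section Pullback

variable {α β : Type*} (f : α → β)

theorem not_exists_descending_chain_comp [Preorder β] [WellFoundedLT β] :
    ¬ ∃ g : ℕ → α, ∀ k, f (g (k + 1)) < f (g k) := by
  rintro ⟨g, hg⟩
  obtain ⟨k, hk⟩ := WellFounded.not_rel_apply_succ (r := (· < ·)) (f ∘ g)
  exact hk (hg k)

theorem comp_lt_iff_of_incomparable [LinearOrder β] {p q : α}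
    (hpq : ¬ f p < f q) (hqp : ¬ f q < f p) :
    (∀ r, f r < f p ↔ f r < f q) ∧ (∀ r, f p < f r ↔ f q < f r) := by
  have hfpq : f p = f q := le_antisymm (not_lt.1 hqp) (not_lt.1 hpq)
  simp [hfpq]

end Pullback

def vecN (n : ℕ) (x : Fin n → ℤ) : ℕ ×ₗ ℕ ×ₗ ℕ ×ₗ ℕ :=
  toLex (normInf n x, toLex (maxCount n x, toLex (n - goodCount n x, norm1 n x)))

theorem vecLt_eq (n : ℕ) : vecLt n = fun x y => vecN n x < vecN n y := by
  ext x y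
  simp [vecLt, vecN, Prod.Lex.lt_iff]

theorem normInf_le_of_vecLt {n : ℕ} {x y : Fin n → ℤ} (h : vecLt n y x) :
    normInf n y ≤ normInf n x :=
  h.elim le_of_lt fun h => h.1.le

theorem normInf_le_iff {n N : ℕ} {x : Fin n → ℤ} :
    normInf n x ≤ N ↔ ∀ i, (x i).natAbs ≤ N := by
  simp [normInf]

theorem finite_setOf_normInf_le (n N : ℕ) : {x : Fin n → ℤ | normInf n x ≤ N}.Finite := by
  refine (Set.Finite.pi' fun _ => Set.finite_Icc (-(N : ℤ)) N).subset fun x hx i => ?_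
  have hxi := normInf_le_iff.1 hx i
  simp only [Set.mem_Icc]
  omega

/-- the relation `vecLt` is a strongly Artinian partial order on `ℤⁿ`:
it is a strict partial order, Artinian (no infinite strictly descending chain),
super-Artinian (incomparable elements have the same lower and upper sets), and every
lower set `{y : y < x}` is finite. -/
theorem stmt_1 (n : ℕ) :
    (∀ x, ¬ vecLt n x x) ∧ Transitive (vecLt n) ∧
    (¬ ∃ f : ℕ → (Fin n → ℤ), ∀ k, vecLt n (f (k + 1)) (f k)) ∧
    (∀ p q, ¬ vecLt n p q → ¬ vecLt n q p →
      ((∀ r, vecLt n r p ↔ vecLt n r q) ∧ (∀ r, vecLt n p r ↔ vecLt n q r))) ∧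
    (∀ x, {y | vecLt n y x}.Finite) := by
  have lowerSet_finite (x : Fin n → ℤ) : {y | vecLt n y x}.Finite :=
    (finite_setOf_normInf_le n (normInf n x)).subset fun _ => normInf_le_of_vecLt
  rw [vecLt_eq] at lowerSet_finite ⊢
  exact ⟨fun x => lt_irrefl _, fun _ _ _ => lt_trans, not_exists_descending_chain_comp _,
    fun _ _ => comp_lt_iff_of_incomparable _, lowerSet_finite⟩
end

section
/- Let v ∈ ℤⁿ with ‖v‖_∞ = M, let I ⊆ {1,…,n}, and suppose |v_t| = M for some t ∈ I. Let w̃ ∈ ℤⁿ satisfy w̃_j = v_j for all j ∉ I and |w̃_i| < M for all i ∈ I, and let w be obtained from w̃ by a signed permutation of coordinates. Then either ‖w‖_∞ < ‖v‖_∞, or ‖w‖_∞ = ‖v‖_∞ and w has strictly fewer coordinates of absolute value ‖w‖_∞ than v has coordinates of absolute value ‖v‖_∞. -/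
/-!
A signed permutation only permutes the absolute values of the coordinates, so `w` has the same
sup-norm and the same number of maximal coordinates as `wt`. Passing from `v` to `wt` keeps every
coordinate at most `M`, creates no new coordinate of absolute value `M` (those in `I` drop below
`M`, the others are unchanged), and destroys the one at `t`.
-/

open Finset

section

variable {ι : Type*} [Fintype ι]

lemma Finset.sup_univ_comp_perm {α : Type*} [SemilatticeSup α] [OrderBot α] (f : ι → α)
    (σ : Equiv.Perm ι) : univ.sup (fun i => f (σ i)) = univ.sup f := by
  conv_rhs => rw [← univ_map_equiv_to_embedding σ, sup_map]
  rfl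

lemma Finset.card_filter_univ_comp_perm (p : ι → Prop) [DecidablePred p] (σ : Equiv.Perm ι) :
    #{i | p (σ i)} = #{i | p i} := by
  simp only [card_filter]
  exact Equiv.sum_comp σ fun i => if p i then 1 else 0

lemma Int.natAbs_mul_of_isUnit {u : ℤ} (hu : IsUnit u) (a : ℤ) : (u * a).natAbs = a.natAbs := by
  rw [Int.natAbs_mul, Int.natAbs_of_isUnit hu, one_mul]

variable {f g : ι → ℕ} {I : Finset ι} {M : ℕ}

lemma sup_le_of_lt_on_of_eq_off (hf : ∀ i, f i ≤ M) (hout : ∀ j ∉ I, g j = f j)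
    (hin : ∀ i ∈ I, g i < M) : univ.sup g ≤ M := by
  refine Finset.sup_le fun i _ => ?_
  by_cases hi : i ∈ I
  · exact (hin i hi).le
  · exact hout i hi ▸ hf i

lemma levelSet_ssubset_of_lt_on_of_eq_off {t : ι} (htI : t ∈ I) (htM : f t = M)
    (hout : ∀ j ∉ I, g j = f j) (hin : ∀ i ∈ I, g i < M) :
    ({i | g i = M} : Finset ι) ⊂ ({i | f i = M} : Finset ι) := by
  have hsub : ({i | g i = M} : Finset ι) ⊆ ({i | f i = M} : Finset ι) := fun i => by
    simp only [mem_filter, mem_univ, true_and]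
    intro hi
    by_cases hiI : i ∈ I
    · exact absurd hi (hin i hiI).ne
    · rwa [← hout i hiI]
  exact (ssubset_iff_of_subset hsub).2 ⟨t, by simpa using htM, by simpa using (hin t htI).ne⟩

lemma sup_lt_or_card_levelSet_lt (hg : univ.sup g ≤ M)
    (hlevel : ({i | g i = M} : Finset ι) ⊂ ({i | f i = M} : Finset ι)) :
    univ.sup g < M ∨ (univ.sup g = M ∧ #{i | g i = M} < #{i | f i = M}) :=
  hg.lt_or_eq.imp_right fun h => ⟨h, card_lt_card hlevel⟩

end

/-- Let `v ∈ ℤⁿ` with `‖v‖_∞ = M`, `I ⊆ {1,…,n}`, and `|v_t| = M` for some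
`t ∈ I`. Let `wt` agree with `v` outside `I` and satisfy `|wt_i| < M` on `I`, and let `w` be
obtained from `wt` by a signed permutation of coordinates. Then either `‖w‖_∞ < ‖v‖_∞`, or
`‖w‖_∞ = ‖v‖_∞` and `w` has strictly fewer coordinates of maximal absolute value than `v`. -/
theorem stmt_3 (n : ℕ) (v wt w : Fin n → ℤ) (I : Finset (Fin n)) (t : Fin n) (M : ℕ)
    (hM : M = Finset.univ.sup fun i => (v i).natAbs)
    (htI : t ∈ I) (htM : (v t).natAbs = M)
    (hout : ∀ j ∉ I, wt j = v j)
    (hin : ∀ i ∈ I, (wt i).natAbs < M)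
    (σ : Equiv.Perm (Fin n)) (ε : Fin n → ℤ) (hε : ∀ i, ε i = 1 ∨ ε i = -1)
    (hw : ∀ i, w i = ε i * wt (σ i)) :
    (Finset.univ.sup fun i => (w i).natAbs) < M ∨
    ((Finset.univ.sup fun i => (w i).natAbs) = M ∧
      (Finset.univ.filter fun i => (w i).natAbs = M).card <
        (Finset.univ.filter fun i => (v i).natAbs = M).card) := by
  have hw_abs (i : Fin n) : (w i).natAbs = (wt (σ i)).natAbs := by
    rw [hw, Int.natAbs_mul_of_isUnit (Int.isUnit_iff.2 (hε i))]
  have hv_le (i : Fin n) : (v i).natAbs ≤ M :=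
    hM ▸ le_sup (f := fun i => (v i).natAbs) (mem_univ i)
  have hout_abs (j : Fin n) (hj : j ∉ I) : (wt j).natAbs = (v j).natAbs :=
    congrArg Int.natAbs (hout j hj)
  simp only [hw_abs]
  rw [sup_univ_comp_perm (fun i => (wt i).natAbs),
    card_filter_univ_comp_perm (fun i => (wt i).natAbs = M)]
  exact sup_lt_or_card_levelSet_lt (sup_le_of_lt_on_of_eq_off hv_le hout_abs hin)
    (levelSet_ssubset_of_lt_on_of_eq_off htI htM hout_abs hin)
end

section
/- For n ≥ 4 and distinct indices i, j ≤ d < k < m ≤ n, the identity R_{ij}L_{ij}⁻¹ = R_{ki}⁻¹ L_{mj} L_{mi}⁻¹ L_{mj}⁻¹ R_{ij} R_{ki} R_{kj}⁻¹ L_{ij}⁻¹ L_{mi} holds in Aut(Fₙ). -/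
/-! An automorphism of a free group is determined by its values on the generators. Since
`i, j < d ≤ k < m`, the indices `i, j, k, m` are pairwise distinct, and both sides send `x_i` to
`x_j⁻¹ x_i x_j` and fix every other generator: a finite word computation for each of
`x_i, x_j, x_k, x_m` and trivial for the rest. -/

namespace FreeGroup

variable {α : Type*}

theorem mulAut_ext {e f : MulAut (FreeGroup α)} (h : ∀ a, e (of a) = f (of a)) : e = f :=
  MulEquiv.toMonoidHom_injective (ext_hom _ _ h)

variable {e : MulAut (FreeGroup α)} {a b : α}

theorem inv_apply_of_fix_of_ne (h : ∀ c, c ≠ a → e (of c) = of c) :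
    ∀ c, c ≠ a → e⁻¹ (of c) = of c :=
  fun c hc => (MulEquiv.symm_apply_eq e).2 (h c hc).symm

theorem inv_apply_of_apply_eq_mul_of (hab : a ≠ b)
    (h : e (of a) = of a * of b ∧ ∀ c, c ≠ a → e (of c) = of c) :
    e⁻¹ (of a) = of a * (of b)⁻¹ ∧ ∀ c, c ≠ a → e⁻¹ (of c) = of c := by
  refine ⟨(MulEquiv.symm_apply_eq e).2 ?_, inv_apply_of_fix_of_ne h.2⟩
  rw [_root_.map_mul, _root_.map_inv, h.1, h.2 b hab.symm, mul_inv_cancel_right]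

theorem inv_apply_of_apply_eq_of_mul (hab : a ≠ b)
    (h : e (of a) = of b * of a ∧ ∀ c, c ≠ a → e (of c) = of c) :
    e⁻¹ (of a) = (of b)⁻¹ * of a ∧ ∀ c, c ≠ a → e⁻¹ (of c) = of c := by
  refine ⟨(MulEquiv.symm_apply_eq e).2 ?_, inv_apply_of_fix_of_ne h.2⟩
  rw [_root_.map_mul, _root_.map_inv, h.1, h.2 b hab.symm, inv_mul_cancel_left]

end FreeGroup

theorem stmt_7_general (n : ℕ) (d : ℕ)
    (R L : Fin n → Fin n → MulAut (FreeGroup (Fin n)))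
    (hR : ∀ a b : Fin n, a ≠ b →
      (R a b) (FreeGroup.of a) = FreeGroup.of a * FreeGroup.of b ∧
      ∀ c : Fin n, c ≠ a → (R a b) (FreeGroup.of c) = FreeGroup.of c)
    (hL : ∀ a b : Fin n, a ≠ b →
      (L a b) (FreeGroup.of a) = FreeGroup.of b * FreeGroup.of a ∧
      ∀ c : Fin n, c ≠ a → (L a b) (FreeGroup.of c) = FreeGroup.of c)
    (i j k m : Fin n) (hij : i ≠ j)
    (hid : (i : ℕ) < d) (hjd : (j : ℕ) < d)
    (hdk : d ≤ (k : ℕ)) (hkm : (k : ℕ) < (m : ℕ)) :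
    R i j * (L i j)⁻¹ =
      (R k i)⁻¹ * L m j * (L m i)⁻¹ * (L m j)⁻¹ * R i j * R k i * (R k j)⁻¹ *
        (L i j)⁻¹ * L m i := by
  have hR_inv := fun a b hab => FreeGroup.inv_apply_of_apply_eq_mul_of hab (hR a b hab)
  have hL_inv := fun a b hab => FreeGroup.inv_apply_of_apply_eq_of_mul hab (hL a b hab)
  refine FreeGroup.mulAut_ext fun c => ?_
  obtain rfl | rfl | rfl | rfl | ⟨hci, hcj, hck, hcm⟩ :
      c = i ∨ c = j ∨ c = k ∨ c = m ∨ (c ≠ i ∧ c ≠ j ∧ c ≠ k ∧ c ≠ m) := by tauto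
  all_goals
    simp (disch := omega) only [MulAut.mul_apply, map_mul, map_inv, hR, hL, hR_inv, hL_inv]
  all_goals group

/-- For `n ≥ 4` and distinct indices `i, j ≤ d < k < m ≤ n` (0-indexed:
`i, j < d ≤ k < m < n`), the identity
`R_{ij} L_{ij}⁻¹ = R_{ki}⁻¹ L_{mj} L_{mi}⁻¹ L_{mj}⁻¹ R_{ij} R_{ki} R_{kj}⁻¹ L_{ij}⁻¹ L_{mi}`
holds in `Aut(Fₙ)`, where `R a b : x_a ↦ x_a x_b` and `L a b : x_a ↦ x_b x_a` are the
Nielsen automorphisms fixing the other generators. -/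
theorem stmt_7 (n : ℕ) (hn : 4 ≤ n) (d : ℕ)
    (R L : Fin n → Fin n → MulAut (FreeGroup (Fin n)))
    (hR : ∀ a b : Fin n, a ≠ b →
      (R a b) (FreeGroup.of a) = FreeGroup.of a * FreeGroup.of b ∧
      ∀ c : Fin n, c ≠ a → (R a b) (FreeGroup.of c) = FreeGroup.of c)
    (hL : ∀ a b : Fin n, a ≠ b →
      (L a b) (FreeGroup.of a) = FreeGroup.of b * FreeGroup.of a ∧
      ∀ c : Fin n, c ≠ a → (L a b) (FreeGroup.of c) = FreeGroup.of c)
    (i j k m : Fin n) (hij : i ≠ j)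
    (hid : (i : ℕ) < d) (hjd : (j : ℕ) < d)
    (hdk : d ≤ (k : ℕ)) (hkm : (k : ℕ) < (m : ℕ)) :
    R i j * (L i j)⁻¹ =
      (R k i)⁻¹ * L m j * (L m i)⁻¹ * (L m j)⁻¹ * R i j * R k i * (R k j)⁻¹ *
        (L i j)⁻¹ * L m i :=
  stmt_7_general n d R L hR hL i j k m hij hid hjd hdk hkm
end

section
/- For pairwise distinct indices i, j, k, m ≤ n, the identity [R_{ij}, R_{ik}] = R_{mi}⁻¹ [R_{ij}, R_{ik}] R_{mi} [R_{mk}, R_{mj}] holds in Aut(Fₙ), where [a,b] = a⁻¹b⁻¹ab. -/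
/-- For pairwise distinct indices `i, j, k, m`, the identity
`[R_{ij}, R_{ik}] = R_{mi}⁻¹ [R_{ij}, R_{ik}] R_{mi} [R_{mk}, R_{mj}]` holds in `Aut(Fₙ)`,
where `[a,b] = a⁻¹ b⁻¹ a b` and `R a b : x_a ↦ x_a x_b` is the Nielsen automorphism fixing
the other generators. -/
theorem stmt_8 (n : ℕ)
    (R : Fin n → Fin n → MulAut (FreeGroup (Fin n)))
    (hR : ∀ a b : Fin n, a ≠ b →
      (R a b) (FreeGroup.of a) = FreeGroup.of a * FreeGroup.of b ∧
      ∀ c : Fin n, c ≠ a → (R a b) (FreeGroup.of c) = FreeGroup.of c)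
    (i j k m : Fin n) (hij : i ≠ j) (hik : i ≠ k) (him : i ≠ m)
    (hjk : j ≠ k) (hjm : j ≠ m) (hkm : k ≠ m) :
    (R i j)⁻¹ * (R i k)⁻¹ * R i j * R i k =
      (R m i)⁻¹ * ((R i j)⁻¹ * (R i k)⁻¹ * R i j * R i k) * R m i *
        ((R m k)⁻¹ * (R m j)⁻¹ * R m k * R m j) := by
  have hinv : ∀ a b : Fin n, a ≠ b →
      (R a b)⁻¹ (FreeGroup.of a) = FreeGroup.of a * (FreeGroup.of b)⁻¹ ∧
      ∀ c : Fin n, c ≠ a → (R a b)⁻¹ (FreeGroup.of c) = FreeGroup.of c := by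
    intro a b hab
    constructor
    · rw [MulAut.inv_def, MulEquiv.symm_apply_eq, map_mul, map_inv,
        (hR a b hab).1, (hR a b hab).2 b (Ne.symm hab)]
      group
    · intro c hca
      rw [MulAut.inv_def, MulEquiv.symm_apply_eq, (hR a b hab).2 c hca]
  apply MulEquiv.toMonoidHom_injective
  apply FreeGroup.ext_hom
  intro c
  have e1 := (hR i j hij).1
  have e2 := (hR i k hik).1
  have e3 := (hR m i him.symm).1
  have e4 := (hR m k hkm.symm).1
  have e5 := (hR m j hjm.symm).1
  have f1 := (hR i j hij).2
  have f2 := (hR i k hik).2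
  have f3 := (hR m i him.symm).2
  have f4 := (hR m k hkm.symm).2
  have f5 := (hR m j hjm.symm).2
  have g1 := (hinv i j hij).1
  have g2 := (hinv i k hik).1
  have g3 := (hinv m i him.symm).1
  have g4 := (hinv m k hkm.symm).1
  have g5 := (hinv m j hjm.symm).1
  have k1 := (hinv i j hij).2
  have k2 := (hinv i k hik).2
  have k3 := (hinv m i him.symm).2
  have k4 := (hinv m k hkm.symm).2
  have k5 := (hinv m j hjm.symm).2
  rcases eq_or_ne c i with rfl | hci
  · simp [MonoidHom.coe_coe, MulAut.mul_apply, e1, e2, e3, e4, e5, f1, f2, f3, f4, f5, g1, g2, g3, g4, g5, k1, k2, k3, k4, k5,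
      map_mul, map_inv, hij, hik, him, hjk, hjm, hkm, hij.symm, hik.symm, him.symm,
      hjk.symm, hjm.symm, hkm.symm]
  · rcases eq_or_ne c m with rfl | hcm
    · simp [MonoidHom.coe_coe, MulAut.mul_apply, e1, e2, e3, e4, e5, f1, f2, f3, f4, f5, g1, g2, g3, g4, g5, k1, k2, k3, k4, k5,
        map_mul, map_inv, hij, hik, him, hjk, hjm, hkm, hij.symm, hik.symm, him.symm,
        hjk.symm, hjm.symm, hkm.symm]
      group
    · simp [MonoidHom.coe_coe, MulAut.mul_apply, f1 c hci, f2 c hci, f3 c hcm, f4 c hcm, f5 c hcm,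
        k1 c hci, k2 c hci, k3 c hcm, k4 c hcm, k5 c hcm]
end

section
/- Let G = SLₙ(ℤ) act on row vectors Um_{1×n}(ℤ) (vectors in ℤⁿ with coprime entries) by v·g⁻¹. Order ℤⁿ by N(v) = (‖v‖_∞, m(v), n − g(v), ‖v‖₁) lexicographically, where m(v) counts maximal coordinates and g(v) counts good coordinates. If v ∈ Um_{1×n}(ℤ) with ‖v‖_∞ ≥ 2, then there exist at least ⌊(n+1)/3⌋ pairs (w, E) where E is an elementary matrix E_{ij}(±1) and w = v·E satisfies w < v. -/
/-!
Split the coordinates of `v` into the good ones and the rest (maximal or zero). Unimodularity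
together with `‖v‖_∞ ≥ 2` forces a good coordinate, and a maximal coordinate is never good. For a
good `i` and a non-good `j`, adding `±v i` to `v j` with the sign that pushes `v j` towards `0`
decreases `N`: a maximal coordinate shrinks, which lowers `‖v‖_∞` or `m(v)`; a zero coordinate
becomes good, which raises `g(v)` while `‖v‖_∞` and `m(v)` stay put. This yields
`g (n - g) ≥ n - 1 ≥ ⌊(n+1)/3⌋` decreasing moves.
-/

open Finset

theorem card_filter_update_add {ι α : Type*} [Fintype ι] [DecidableEq ι] (P : α → Prop)
    [DecidablePred P] (f : ι → α) (j : ι) (x : α) :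
    #{k | P (Function.update f j x k)} + (if P (f j) then 1 else 0) =
      #{k | P (f k)} + (if P x then 1 else 0) := by
  simp only [card_filter, Function.apply_update (fun _ a => if P a then 1 else 0),
    sum_update_of_mem (mem_univ j), sum_eq_add_sum_sdiff_singleton_of_mem (mem_univ j)]
  ring

theorem add_add_one_div_three_le_mul {a b : ℕ} (ha : 1 ≤ a) (hb : 1 ≤ b) :
    (a + b + 1) / 3 ≤ a * b :=
  Nat.div_le_of_le_mul (by nlinarith)

/-- The sign `ε = ±1` for which `b + ε a` lies between `0` and `b`. -/
def descentSign (a b : ℤ) : ℤ := if 0 ≤ a * b then -1 else 1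

theorem descentSign_mem (a b : ℤ) : descentSign a b ∈ ({1, -1} : Finset ℤ) := by
  unfold descentSign; split_ifs <;> simp

theorem natAbs_add_descentSign_mul {a b : ℤ} (h : a.natAbs ≤ b.natAbs) :
    (b + descentSign a b * a).natAbs = b.natAbs - a.natAbs := by
  unfold descentSign
  split_ifs with hab
  · rcases mul_nonneg_iff.mp hab with ⟨_, _⟩ | ⟨_, _⟩ <;> omega
  · rcases mul_neg_iff.mp (not_le.mp hab) with ⟨_, _⟩ | ⟨_, _⟩ <;> omega

theorem natAbs_zero_add_descentSign_mul (a : ℤ) :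
    (0 + descentSign a 0 * a).natAbs = a.natAbs := by
  simp [descentSign]

def IsGoodCoord (n : ℕ) (v : Fin n → ℤ) (i : Fin n) : Prop :=
  0 < (v i).natAbs ∧ (v i).natAbs < normInf n v

section

variable {n : ℕ} {v : Fin n → ℤ}

theorem normInf_le_iff_s9 {M : ℕ} : normInf n v ≤ M ↔ ∀ k, (v k).natAbs ≤ M := by
  simp [normInf, Finset.sup_le_iff]

theorem natAbs_le_normInf (k : Fin n) : (v k).natAbs ≤ normInf n v :=
  le_sup (f := fun k => (v k).natAbs) (mem_univ k)

theorem exists_natAbs_eq_normInf (hv : 0 < normInf n v) : ∃ k, (v k).natAbs = normInf n v := by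
  rcases isEmpty_or_nonempty (Fin n) with h | h
  · simp [normInf, univ_eq_empty] at hv
  · obtain ⟨k, -, hk⟩ := exists_mem_eq_sup univ univ_nonempty fun k => (v k).natAbs
    exact ⟨k, hk.symm⟩

theorem normInf_update_le {j : Fin n} {x : ℤ} (hx : x.natAbs ≤ normInf n v) :
    normInf n (Function.update v j x) ≤ normInf n v := by
  refine normInf_le_iff_s9.mpr fun k => ?_
  rcases eq_or_ne k j with rfl | hk
  · simpa using hx
  · simpa [hk] using natAbs_le_normInf k

theorem normInf_update_eq {j : Fin n} {x : ℤ} (hj : (v j).natAbs < normInf n v)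
    (hx : x.natAbs ≤ normInf n v) : normInf n (Function.update v j x) = normInf n v := by
  obtain ⟨k, hk⟩ := exists_natAbs_eq_normInf (v := v) (by omega)
  have hkj : k ≠ j := by rintro rfl; omega
  refine le_antisymm (normInf_update_le hx) ?_
  calc normInf n v = (Function.update v j x k).natAbs := by simp [hkj, hk]
    _ ≤ _ := natAbs_le_normInf k

theorem vecLt_update_of_natAbs_eq_normInf {j : Fin n} {x : ℤ}
    (hj : (v j).natAbs = normInf n v) (hx : x.natAbs < normInf n v) :
    vecLt n (Function.update v j x) v := by
  rcases (normInf_update_le hx.le (j := j)).lt_or_eq with hlt | heq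
  · exact Or.inl hlt
  refine Or.inr ⟨heq, Or.inl ?_⟩
  have hcount := card_filter_update_add (fun a : ℤ => a.natAbs = normInf n v) v j x
  simp only [hj, hx.ne, if_true, if_false] at hcount
  simp only [maxCount, heq]
  omega

theorem vecLt_update_of_eq_zero {j : Fin n} {x : ℤ} (hj : v j = 0) (hx₀ : 0 < x.natAbs)
    (hx : x.natAbs < normInf n v) : vecLt n (Function.update v j x) v := by
  have hnorm := normInf_update_eq (j := j) (by simp [hj]; omega) hx.le
  have hmax := card_filter_update_add (fun a : ℤ => a.natAbs = normInf n v) v j x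
  have hgood := card_filter_update_add
    (fun a : ℤ => 0 < a.natAbs ∧ a.natAbs < normInf n v) v j x
  simp only [hj, Int.natAbs_zero, hx.ne, hx₀, hx, (hx₀.trans hx).ne, lt_irrefl, false_and,
    and_self, if_true, if_false] at hmax hgood
  have hle : goodCount n (Function.update v j x) ≤ n := (card_filter_le _ _).trans (by simp)
  refine Or.inr ⟨hnorm, Or.inr ⟨?_, Or.inl ?_⟩⟩
  · simp only [maxCount, hnorm]
    omega
  · simp only [goodCount, hnorm] at hle ⊢
    omega

theorem vecLt_update_descentSign {i j : Fin n} (hi : IsGoodCoord n v i)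
    (hj : ¬ IsGoodCoord n v j) :
    vecLt n (Function.update v j (v j + descentSign (v i) (v j) * v i)) v := by
  obtain ⟨hi₀, hiM⟩ := hi
  rcases eq_or_ne (v j) 0 with hj₀ | hj₀
  · rw [hj₀]
    exact vecLt_update_of_eq_zero hj₀ (by rwa [natAbs_zero_add_descentSign_mul])
      (by rwa [natAbs_zero_add_descentSign_mul])
  · have hjM : (v j).natAbs = normInf n v := by
      have := natAbs_le_normInf (v := v) j
      simp only [IsGoodCoord, not_and, not_lt] at hj
      have := hj (Int.natAbs_pos.mpr hj₀)
      omega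
    refine vecLt_update_of_natAbs_eq_normInf hjM ?_
    rw [natAbs_add_descentSign_mul (by omega)]
    omega

theorem exists_isGoodCoord_of_gcd_eq_one (huni : univ.gcd v = 1) (h2 : 2 ≤ normInf n v) :
    ∃ i, IsGoodCoord n v i := by
  by_contra! hnone
  have hdvd : (normInf n v : ℤ) ∣ univ.gcd v := by
    refine dvd_gcd fun k _ => Int.natCast_dvd.mpr ?_
    have := natAbs_le_normInf (v := v) k
    have : (v k).natAbs = 0 ∨ (v k).natAbs = normInf n v := by
      simp only [IsGoodCoord] at hnone
      have := hnone k
      omega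
    rcases this with h | h <;> simp [h]
  rw [huni, Int.natCast_dvd, Int.natAbs_one, Nat.dvd_one] at hdvd
  omega

end

open Classical in
/-- if `v ∈ Um_{1×n}(ℤ)` is a unimodular row vector with `‖v‖_∞ ≥ 2`, then
there are at least `⌊(n+1)/3⌋` elementary matrices `E = E_{ij}(±1)` (encoded by the triple
`(i, j, ε)` with `i ≠ j`, `ε = ±1`; the right action of `E` adds `ε·(coordinate i)` to
coordinate `j`) such that `w = v·E` satisfies `w < v` in the lexicographic `N`-order. -/
theorem stmt_9 (n : ℕ) (v : Fin n → ℤ)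
    (huni : Finset.univ.gcd v = 1)
    (h2 : 2 ≤ normInf n v) :
    (n + 1) / 3 ≤
      ((Finset.univ ×ˢ Finset.univ ×ˢ ({1, -1} : Finset ℤ)).filter
        (fun p : Fin n × Fin n × ℤ => p.1 ≠ p.2.1 ∧
          vecLt n (Function.update v p.2.1 (v p.2.1 + p.2.2 * v p.1)) v)).card := by
  classical
  obtain ⟨i₀, hi₀⟩ := exists_isGoodCoord_of_gcd_eq_one huni h2
  obtain ⟨k, hk⟩ := exists_natAbs_eq_normInf (v := v) (by omega)
  set G := univ.filter (IsGoodCoord n v)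
  have hG : 1 ≤ #G := card_pos.mpr ⟨i₀, by simpa [G] using hi₀⟩
  have hGc : 1 ≤ #Gᶜ := card_pos.mpr ⟨k, by simp [G, IsGoodCoord, hk]⟩
  let move : Fin n × Fin n → Fin n × Fin n × ℤ := fun p => (p.1, p.2, descentSign (v p.1) (v p.2))
  have move_injective : Function.Injective move := fun p q h =>
    Prod.ext (congrArg (·.1) h) (congrArg (·.2.1) h)
  calc (n + 1) / 3 = (#G + #Gᶜ + 1) / 3 := by rw [card_add_card_compl, Fintype.card_fin]
    _ ≤ #G * #Gᶜ := add_add_one_div_three_le_mul hG hGc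
    _ = #((G ×ˢ Gᶜ).image move) := by
      rw [card_image_of_injective _ move_injective, card_product]
    _ ≤ _ := card_le_card ?_
  intro p hp
  obtain ⟨⟨i, j⟩, hij, rfl⟩ := mem_image.mp hp
  simp only [mem_product, mem_compl, G, mem_filter, mem_univ, true_and] at hij
  refine mem_filter.mpr
    ⟨mem_product.mpr ⟨mem_univ _, mem_product.mpr ⟨mem_univ _, descentSign_mem _ _⟩⟩,
      fun h : i = j => hij.2 (h ▸ hij.1), vecLt_update_descentSign hij.1 hij.2⟩
end

section
/- Let A ∈ Um_{d×n}(ℤ) be a d×n integer matrix whose columns span ℤ^d, and suppose ‖row_k(A)‖_∞ = M ≥ 2, where row_k is the k-th row. Then A has a column c of depth exactly k (i.e., c_k ≠ 0 and c_t = 0 for t > k) such that M does not divide c_k; in particular 0 < |c_k| < M. -/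
/-- Let `A` be a `d×n` integer matrix whose columns span `ℤ^d` and which is
`k`-unimodular (its columns of depth `≤ k`, i.e. vanishing in rows `> k`, span the copy of
`ℤ^k` inside `ℤ^d`). If `M = ‖row_k(A)‖_∞ ≥ 2`, then `A` has a column `c` of depth exactly
`k` (so `c_k ≠ 0` and `c_t = 0` for `t > k`) with `M ∤ c_k`; in particular `0 < |c_k| < M`. -/
theorem stmt_11 (d n : ℕ) (A : Matrix (Fin d) (Fin n) ℤ) (k : Fin d) (M : ℕ)
    (hM : M = Finset.univ.sup fun j => (A k j).natAbs) (h2 : 2 ≤ M)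
    (hUm : ∀ x : Fin d → ℤ,
      x ∈ Submodule.span ℤ (Set.range fun j : Fin n => fun i : Fin d => A i j))
    (hkUni : ∀ x : Fin d → ℤ, (∀ t : Fin d, k < t → x t = 0) →
      x ∈ Submodule.span ℤ
        {c : Fin d → ℤ | ∃ j : Fin n, (∀ t : Fin d, k < t → A t j = 0) ∧
          c = fun i : Fin d => A i j}) :
    ∃ j : Fin n, (∀ t : Fin d, k < t → A t j = 0) ∧ A k j ≠ 0 ∧ ¬ (M : ℤ) ∣ A k j ∧
      0 < (A k j).natAbs ∧ (A k j).natAbs < M := by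
  -- First find a depth-≤k column with M ∤ A k j
  have key : ∃ j : Fin n, (∀ t : Fin d, k < t → A t j = 0) ∧ ¬ (M : ℤ) ∣ A k j := by
    by_contra hcon
    push_neg at hcon
    haveI : Fact (1 < M) := ⟨lt_of_lt_of_le one_lt_two h2⟩
    haveI : NeZero M := ⟨by omega⟩
    -- linear map v ↦ (v k : ZMod M)
    let f : (Fin d → ℤ) →ₗ[ℤ] ZMod M :=
      (Int.castRingHom (ZMod M)).toIntLinearMap.comp (LinearMap.proj k)
    have hx : (Pi.single k 1 : Fin d → ℤ) ∈ Submodule.span ℤ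
        {c : Fin d → ℤ | ∃ j : Fin n, (∀ t : Fin d, k < t → A t j = 0) ∧
          c = fun i : Fin d => A i j} := by
      apply hkUni
      intro t ht
      exact Pi.single_eq_of_ne (ne_of_gt ht) 1
    have hzero : ∀ x ∈ Submodule.span ℤ
        {c : Fin d → ℤ | ∃ j : Fin n, (∀ t : Fin d, k < t → A t j = 0) ∧
          c = fun i : Fin d => A i j}, f x = 0 := by
      intro x hxmem
      induction hxmem using Submodule.span_induction with
      | mem c hc =>
        obtain ⟨j, hdep, rfl⟩ := hc
        have := hcon j hdep
        simpa [f, ZMod.intCast_zmod_eq_zero_iff_dvd] using this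
      | zero => simp
      | add x y _ _ hx hy => simp [map_add, hx, hy]
      | smul a x _ hx =>
        show f (a • x) = 0
        rw [map_smul, hx, smul_zero]
    have h1 : f (Pi.single k 1) = 0 := hzero _ hx
    have : (1 : ZMod M) = 0 := by simpa [f] using h1
    exact one_ne_zero this
  obtain ⟨j, hdep, hdvd⟩ := key
  have hne : A k j ≠ 0 := by
    rintro h0; exact hdvd (h0 ▸ dvd_zero _)
  have hle : (A k j).natAbs ≤ M := by
    rw [hM]; exact Finset.le_sup (f := fun j => (A k j).natAbs) (Finset.mem_univ j)
  have hlt : (A k j).natAbs < M := by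
    rcases lt_or_eq_of_le hle with h | h
    · exact h
    · exact absurd (h ▸ Int.natAbs_dvd.mpr dvd_rfl) hdvd
  exact ⟨j, hdep, hne, hdvd, Int.natAbs_pos.mpr hne, hlt⟩
end

section
/- Let G be a group with finite generating set X, let H ≤ G, and suppose A ⊆ G/H is a finite subset whose full preimage under the projection ρ : G → G/H spans a connected subgraph of the Cayley graph Cay(G, X). Then H is finitely generated. -/
/-- Let `G` be a group with a finite generating set `X`, `H ≤ G`, and let
`A` be a finite nonempty subset of `G/H` such that the preimage `ρ⁻¹(A)` spans a connected
subgraph of the Cayley graph `Cay(G, X)` (edges `g — x·g` for `x ∈ X`). Then `H` is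
finitely generated. -/
theorem stmt_14 {G : Type} [Group G] (X : Finset G)
    (hX : Subgroup.closure (X : Set G) = ⊤)
    (H : Subgroup G) (A : Set (G ⧸ H)) (hfin : A.Finite) (hne : A.Nonempty)
    (hconn : ∀ g g' : G, (QuotientGroup.mk g : G ⧸ H) ∈ A →
      (QuotientGroup.mk g' : G ⧸ H) ∈ A →
      Relation.ReflTransGen
        (fun a b : G => (QuotientGroup.mk a : G ⧸ H) ∈ A ∧
          (QuotientGroup.mk b : G ⧸ H) ∈ A ∧
          ∃ x ∈ X, b = x * a ∨ a = x * b) g g') :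
    H.FG := by
  classical
  set t : G ⧸ H → G := fun a => Quotient.out a with ht
  have hmk : ∀ a : G ⧸ H, (QuotientGroup.mk (t a) : G ⧸ H) = a := fun a => Quotient.out_eq a
  set S : Set G := (fun p : (G ⧸ H) × G =>
      (t (QuotientGroup.mk (p.2 * t p.1)))⁻¹ * (p.2 * t p.1)) '' (A ×ˢ (X : Set G)) with hS
  have hSfin : S.Finite := (hfin.prod X.finite_toSet).image _
  -- each putative generator lies in H
  have hgen : ∀ (x : G) (a : G ⧸ H),
      (t (QuotientGroup.mk (x * t a)))⁻¹ * (x * t a) ∈ H := by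
    intro x a
    have h1 : (QuotientGroup.mk (t (QuotientGroup.mk (x * t a))) : G ⧸ H)
        = QuotientGroup.mk (x * t a) := hmk _
    exact QuotientGroup.eq.mp h1
  have hSH : Subgroup.closure S ≤ H := by
    rw [Subgroup.closure_le]
    rintro s ⟨⟨a, x⟩, _, rfl⟩
    exact hgen x a
  -- the "height" function
  set q : G → G := fun g => (t (QuotientGroup.mk g))⁻¹ * g with hq
  -- a single edge step changes the height by a generator
  have step : ∀ u v x : G, x ∈ X → (QuotientGroup.mk u : G ⧸ H) ∈ A → v = x * u →
      q v * (q u)⁻¹ ∈ Subgroup.closure S := by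
    intro u v x hxX huA hvxu
    have e0 : (QuotientGroup.mk (t (QuotientGroup.mk u)) : G ⧸ H) = QuotientGroup.mk u := hmk _
    have e1 : (QuotientGroup.mk (x * t (QuotientGroup.mk u)) : G ⧸ H)
        = QuotientGroup.mk (x * u) := by
      rw [QuotientGroup.eq]
      have h0 := QuotientGroup.eq.mp e0
      have heq : (x * t (QuotientGroup.mk u))⁻¹ * (x * u)
          = (t (QuotientGroup.mk u))⁻¹ * u := by group
      rw [heq]; exact h0
    have hmem : (t (QuotientGroup.mk (x * t (QuotientGroup.mk u))))⁻¹ *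
        (x * t (QuotientGroup.mk u)) ∈ S :=
      ⟨(QuotientGroup.mk u, x), ⟨huA, hxX⟩, rfl⟩
    have hval : q v * (q u)⁻¹ = (t (QuotientGroup.mk (x * t (QuotientGroup.mk u))))⁻¹ *
        (x * t (QuotientGroup.mk u)) := by
      rw [e1, hq, hvxu]
      group
    rw [hval]
    exact Subgroup.subset_closure hmem
  -- key: along a path inside ρ⁻¹(A), the heights differ by an element of ⟨S⟩
  have key : ∀ g g' : G,
      Relation.ReflTransGen
        (fun a b : G => (QuotientGroup.mk a : G ⧸ H) ∈ A ∧
          (QuotientGroup.mk b : G ⧸ H) ∈ A ∧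
          ∃ x ∈ X, b = x * a ∨ a = x * b) g g' →
      q g' * (q g)⁻¹ ∈ Subgroup.closure S := by
    intro g g' hpath
    induction hpath with
    | refl => simpa using (Subgroup.closure S).one_mem
    | @tail u v _ hstep ih =>
        obtain ⟨huA, hvA, x, hxX, hcase⟩ := hstep
        have hstep' : q v * (q u)⁻¹ ∈ Subgroup.closure S := by
          rcases hcase with hvu | huv
          · exact step u v x hxX huA hvu
          · have := step v u x hxX hvA huv
            have hinv : q v * (q u)⁻¹ = (q u * (q v)⁻¹)⁻¹ := by group
            rw [hinv]
            exact (Subgroup.closure S).inv_mem this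
        have hsplit : q v * (q g)⁻¹ = (q v * (q u)⁻¹) * (q u * (q g)⁻¹) := by group
        rw [hsplit]
        exact (Subgroup.closure S).mul_mem hstep' ih
  -- now show H ≤ closure S
  obtain ⟨a0, ha0⟩ := hne
  have hHS : H ≤ Subgroup.closure S := by
    intro h hh
    have h1 : (QuotientGroup.mk (t a0) : G ⧸ H) ∈ A := by rw [hmk]; exact ha0
    have h2 : (QuotientGroup.mk (t a0 * h) : G ⧸ H) = QuotientGroup.mk (t a0) :=
      QuotientGroup.mk_mul_of_mem _ hh
    have hpath := hconn (t a0) (t a0 * h) h1 (by rw [h2]; exact h1)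
    have hmem := key _ _ hpath
    have hq0 : q (t a0) = 1 := by
      rw [hq]
      simp only [hmk]
      group
    have hqh : q (t a0 * h) = h := by
      rw [hq]
      simp only [h2, hmk]
      group
    rwa [hq0, hqh, inv_one, mul_one] at hmem
  rw [Subgroup.fg_iff]
  exact ⟨S, le_antisymm hSH hHS, hSfin⟩
end

section
/- Define f_d(x_d) = x_d and f_i(x_d,…,x_i) = 3^{f_{i+1}(x_d,…,x_{i+1})} · x_i for k ≤ i < d. Suppose nonnegative integer tuples (x_d,…,x_k) and (y_d,…,y_k) satisfy: x_t = y_t for t > m, x_m ≤ y_m − 1, and x_t ≤ 2 y_t for k ≤ t < m, where k ≤ m ≤ d, and f_s(y_d,…,y_s) ≥ 3 for all s < d with y's positive. Then f_t(x_d,…,x_t) ≤ f_t(y_d,…,y_t) − 1 for all k ≤ t ≤ m, and in particular f_k(x_d,…,x_k) < f_k(y_d,…,y_k). -/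
/-! Downward induction on `t`, proving the strict inequality `f_t(x) < f_t(y)`. At `t = m` the
exponents coincide and `x_m < y_m`. Below `m`, `f_{t+1}(x) < f_{t+1}(y)` gives
`3 ^ f_{t+1}(x) ≤ 3 ^ f_{t+1}(y) / 3`, and this factor `3` absorbs the doubling `x_t ≤ 2 y_t`. -/

/-- The tower function `f_i(x_d, …, x_i)` defined by `f_d(x_d) = x_d` and
`f_i = 3 ^ f_{i+1} · x_i` for `i < d`. -/
def towerF (x : ℕ → ℕ) (d i : ℕ) : ℕ :=
  if h : i < d then 3 ^ (towerF x d (i + 1)) * x i else x d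
termination_by d - i
decreasing_by omega

lemma three_pow_mul_lt_three_pow_mul {A B a b : ℕ} (hAB : A < B) (hab : a ≤ 2 * b)
    (hb : 0 < b) : 3 ^ A * a < 3 ^ B * b :=
  calc 3 ^ A * a ≤ 3 ^ A * (2 * b) := Nat.mul_le_mul_left _ hab
    _ < 3 ^ A * (3 * b) := Nat.mul_lt_mul_of_pos_left (by omega) (by positivity)
    _ = 3 ^ (A + 1) * b := by ring
    _ ≤ 3 ^ B * b := Nat.mul_le_mul_right _ (Nat.pow_le_pow_right (by norm_num) hAB)

namespace towerF

variable {x y : ℕ → ℕ} {d : ℕ}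

lemma of_lt {i : ℕ} (h : i < d) : towerF x d i = 3 ^ towerF x d (i + 1) * x i := by
  rw [towerF, dif_pos h]

lemma self : towerF x d d = x d := by
  rw [towerF, dif_neg (lt_irrefl d)]

lemma congr_of_eqOn {i : ℕ} (hid : i ≤ d) (h : ∀ j, i ≤ j → j ≤ d → x j = y j) :
    towerF x d i = towerF y d i := by
  obtain hlt | rfl := hid.lt_or_eq
  · rw [of_lt hlt, of_lt hlt, congr_of_eqOn hlt (fun j hij hjd => h j (by omega) hjd),
      h i le_rfl hlt.le]
  · rw [self, self, h i le_rfl le_rfl]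
termination_by d - i

lemma lt_of_eq_above {i : ℕ} (hid : i ≤ d) (heq : ∀ j, i < j → j ≤ d → x j = y j)
    (hi : x i < y i) :
    towerF x d i < towerF y d i := by
  obtain hlt | rfl := hid.lt_or_eq
  · rw [of_lt hlt, of_lt hlt, congr_of_eqOn hlt (fun j hij hjd => heq j (by omega) hjd)]
    exact Nat.mul_lt_mul_of_pos_left hi (by positivity)
  · rwa [self, self]

lemma lt_of_succ_lt {i : ℕ} (hid : i < d) (hsucc : towerF x d (i + 1) < towerF y d (i + 1))
    (hxy : x i ≤ 2 * y i) (hy : 0 < y i) : towerF x d i < towerF y d i := by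
  rw [of_lt hid, of_lt hid]
  exact three_pow_mul_lt_three_pow_mul hsucc hxy hy

end towerF

theorem stmt_17_general (k m d : ℕ) (hkm : k ≤ m) (hmd : m ≤ d)
    (x y : ℕ → ℕ)
    (hypos : ∀ i, k ≤ i → i ≤ d → 0 < y i)
    (heq : ∀ t, m < t → t ≤ d → x t = y t)
    (hm : x m ≤ y m - 1)
    (hdbl : ∀ t, k ≤ t → t < m → x t ≤ 2 * y t) :
    (∀ t, k ≤ t → t ≤ m → towerF x d t ≤ towerF y d t - 1) ∧
      towerF x d k < towerF y d k := by
  have hlt : ∀ t, k ≤ t → t ≤ m → towerF x d t < towerF y d t := by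
    intro t hkt htm
    induction htm using Nat.decreasingInduction with
    | self =>
      have hym := hypos m hkm hmd
      exact towerF.lt_of_eq_above hmd heq (by omega)
    | of_succ t htm ih =>
      exact towerF.lt_of_succ_lt (by omega) (ih (by omega)) (hdbl t hkt htm)
        (hypos t hkt (by omega))
  exact ⟨fun t hkt htm => Nat.le_sub_one_of_lt (hlt t hkt htm), hlt k le_rfl hkm⟩

/-- with `k ≤ m ≤ d` and positive tuples `x, y` satisfying `x_t = y_t` for
`t > m`, `x_m ≤ y_m − 1`, `x_t ≤ 2 y_t` for `k ≤ t < m`, and `f_s(y) ≥ 3` for `k ≤ s < d`,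
one has `f_t(x) ≤ f_t(y) − 1` for all `k ≤ t ≤ m`; in particular `f_k(x) < f_k(y)`. -/
theorem stmt_17 (k m d : ℕ) (hkm : k ≤ m) (hmd : m ≤ d)
    (x y : ℕ → ℕ)
    (hxpos : ∀ i, k ≤ i → i ≤ d → 0 < x i)
    (hypos : ∀ i, k ≤ i → i ≤ d → 0 < y i)
    (heq : ∀ t, m < t → t ≤ d → x t = y t)
    (hm : x m ≤ y m - 1)
    (hdbl : ∀ t, k ≤ t → t < m → x t ≤ 2 * y t)
    (h3 : ∀ s, k ≤ s → s < d → 3 ≤ towerF y d s) :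
    (∀ t, k ≤ t → t ≤ m → towerF x d t ≤ towerF y d t - 1) ∧
      towerF x d k < towerF y d k :=
  stmt_17_general k m d hkm hmd x y hypos heq hm hdbl
end
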